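/- Let ϕ = (ϕ^k)_{k∈ℕ} be a solution of the infinite Riccati system satisfying sup_{k∈ℕ} sup_{0 ≤ t ≤ T} |ϕ^k(t)| < ∞. For z ∈ ℂ with |z| < 1 define the generating function S_t(z) := Σ_{k=0}^{∞} z^k ϕ^k(t). Then for each such z the series converges absolutely, the function t ↦ S_t(z) is differentiable on [0,T] with (d/dt) S_t(z) = (S_t(z))² − ε (1 − z), and S_T(z) = c (1 − z). -/

import Mathlib

/-!
Since the coefficients are bounded, `∑ zᵏ ϕᵏ(t)` is dominated by a geometric series and the
termwise derivatives `zᵏ (∑_{j ≤ k} ϕʲ ϕᵏ⁻ʲ - εᵏ)` by `|z|ᵏ ((k + 1) B² + |ε|)`, uniformly in `t`;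
hence the series can be differentiated termwise on `[0, T]`. By the Cauchy product the
convolutions `∑_{j ≤ k} ϕʲ ϕᵏ⁻ʲ` sum to `S_t(z)²`, and since `(εᵏ)` and `(ϕᵏ(T))` vanish beyond
`k = 1`, their generating functions are the polynomials `ε (1 - z)` and `c (1 - z)`.
-/

open scoped BigOperators

/-- The sequence ε^i : ε^0 = ε, ε^1 = -ε, ε^i = 0 for i ≥ 2. -/
noncomputable def epsN (ε : ℝ) : ℕ → ℝ := fun i => if i = 0 then ε else if i = 1 then -ε else 0

/-- `ϕ` is a solution of the infinite Riccati system on `[0,T]`. -/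
def IsInfRiccatiSol (T ε c : ℝ) (ϕ : ℕ → ℝ → ℝ) : Prop :=
  (∀ i : ℕ, ∀ t ∈ Set.Icc (0:ℝ) T,
    HasDerivWithinAt (ϕ i)
      ((∑ j ∈ Finset.range (i + 1), ϕ j t * ϕ (i - j) t) - epsN ε i)
      (Set.Icc (0:ℝ) T) t) ∧
  ϕ 0 T = c ∧ ϕ 1 T = -c ∧ ∀ i : ℕ, 2 ≤ i → ϕ i T = 0

open Set Finset MeasureTheory intervalIntegral
open scoped Interval

section SeriesOfDerivatives

variable {E : Type*} [NormedAddCommGroup E] [NormedSpace ℝ E] [CompleteSpace E] {a b t : ℝ}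

theorem ContinuousOn.hasDerivWithinAt_integral_Icc {g : ℝ → E} (hg : ContinuousOn g (Icc a b))
    (ht : t ∈ Icc a b) : HasDerivWithinAt (fun s => ∫ x in a..s, g x) (g t) (Icc a b) t := by
  have : Fact (t ∈ Icc a b) := ⟨ht⟩
  exact integral_hasDerivWithinAt_right
    ((hg.mono (Icc_subset_Icc_right ht.2)).intervalIntegrable_of_Icc ht.1)
    ⟨Icc a b, self_mem_nhdsWithin, hg.aestronglyMeasurable measurableSet_Icc⟩ (hg t ht)

theorem integral_eq_sub_of_hasDerivWithinAt_Icc {f f' : ℝ → E}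
    (hf : ∀ s ∈ Icc a b, HasDerivWithinAt f (f' s) (Icc a b) s)
    (hf' : ContinuousOn f' (Icc a b)) (ht : t ∈ Icc a b) :
    ∫ x in a..t, f' x = f t - f a := by
  have hsub : Icc a t ⊆ Icc a b := Icc_subset_Icc_right ht.2
  refine integral_eq_sub_of_hasDerivAt_of_le ht.1
    (fun s hs => (hf s (hsub hs)).continuousWithinAt.mono hsub) (fun s hs => ?_)
    ((hf'.mono hsub).intervalIntegrable_of_Icc ht.1)
  exact (hf s (hsub (Ioo_subset_Icc_self hs))).hasDerivAt
    (Icc_mem_nhds hs.1 (hs.2.trans_le ht.2))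

theorem hasDerivWithinAt_tsum_Icc {f f' : ℕ → ℝ → E} {u : ℕ → ℝ} (hu : Summable u)
    (hf : ∀ n, ∀ s ∈ Icc a b, HasDerivWithinAt (f n) (f' n s) (Icc a b) s)
    (hf' : ∀ n, ContinuousOn (f' n) (Icc a b)) (hf'u : ∀ n, ∀ s ∈ Icc a b, ‖f' n s‖ ≤ u n)
    (hfs : ∀ s ∈ Icc a b, Summable fun n => f n s) (ht : t ∈ Icc a b) :
    HasDerivWithinAt (fun s => ∑' n, f n s) (∑' n, f' n t) (Icc a b) t := by
  -- `hasDerivAt_tsum` only covers open sets; at the endpoints we differentiate the integral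
  -- representation `∑' n, f n s = ∑' n, f n a + ∫ x in a..s, ∑' n, f' n x` instead.
  have ha : a ∈ Icc a b := ⟨le_rfl, ht.1.trans ht.2⟩
  have hG : ContinuousOn (fun s => ∑' n, f' n s) (Icc a b) := continuousOn_tsum hf' hu hf'u
  have hsum_integral : ∀ s ∈ Icc a b,
      HasSum (fun n => f n s - f n a) (∫ x in a..s, ∑' n, f' n x) := by
    intro s hs
    have hsub : Ι a s ⊆ Icc a b := by
      rw [uIoc_of_le hs.1]
      exact Ioc_subset_Icc_self.trans (Icc_subset_Icc_right hs.2)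
    simp_rw [← integral_eq_sub_of_hasDerivWithinAt_Icc (hf _) (hf' _) hs]
    refine intervalIntegral.hasSum_integral_of_dominated_convergence (fun n _ => u n)
      (fun n => ((hf' n).mono hsub).aestronglyMeasurable measurableSet_uIoc)
      (fun n => ae_of_all _ fun x hx => hf'u n x (hsub hx)) (ae_of_all _ fun _ _ => hu)
      intervalIntegrable_const (ae_of_all _ fun x hx => (Summable.of_norm_bounded hu
        fun n => hf'u n x (hsub hx)).hasSum)
  have hrepr : ∀ s ∈ Icc a b,
      ∑' n, f n s = ∑' n, f n a + ∫ x in a..s, ∑' n, f' n x := fun s hs => by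
    rw [← (((hfs s hs).hasSum.sub (hfs a ha).hasSum).unique (hsum_integral s hs))]
    abel
  exact ((hG.hasDerivWithinAt_integral_Icc ht).const_add _).congr hrepr (hrepr t ht)

end SeriesOfDerivatives

section PowerSeries

variable {𝕜 : Type*} [NormedField 𝕜] {z : 𝕜} {a : ℕ → 𝕜}

theorem summable_norm_pow_mul_of_norm_le (hz : ‖z‖ < 1) {B : ℝ} (ha : ∀ k, ‖a k‖ ≤ B) :
    Summable fun k => ‖z ^ k * a k‖ := by
  refine .of_nonneg_of_le (fun _ => norm_nonneg _) (fun k => ?_)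
    ((summable_geometric_of_lt_one (norm_nonneg z) hz).mul_right B)
  rw [norm_mul, norm_pow]
  exact mul_le_mul_of_nonneg_left (ha k) (pow_nonneg (norm_nonneg z) k)

theorem hasSum_pow_mul_convolution [CompleteSpace 𝕜] (ha : Summable fun k => ‖z ^ k * a k‖) :
    HasSum (fun n => z ^ n * ∑ j ∈ range (n + 1), a j * a (n - j)) ((∑' k, z ^ k * a k) ^ 2) := by
  rw [sq]
  refine (hasSum_sum_range_mul_of_summable_norm ha ha).congr_fun fun n => ?_
  rw [mul_sum]
  refine sum_congr rfl fun j hj => ?_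
  rw [← pow_sub_mul_pow z (Nat.le_of_lt_succ (mem_range.mp hj))]
  ring

theorem hasSum_pow_mul_of_eq_zero (ha : ∀ k, 2 ≤ k → a k = 0) :
    HasSum (fun k => z ^ k * a k) (a 0 + z * a 1) := by
  have hsupp : ∀ k ∉ range 2, z ^ k * a k = 0 := fun k hk => by
    rw [ha k (not_lt.mp (mt mem_range.mpr hk)), mul_zero]
  simpa [sum_range_succ, mul_comm] using hasSum_sum_of_ne_finset_zero hsupp

end PowerSeries

theorem summable_geometric_mul_linear {r : ℝ} (hr0 : 0 ≤ r) (hr : r < 1) (A C : ℝ) :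
    Summable fun k : ℕ => r ^ k * ((k + 1) * A + C) := by
  have hr' : ‖r‖ < 1 := by rwa [Real.norm_of_nonneg hr0]
  have hlin : Summable fun k : ℕ => (k : ℝ) ^ 1 * r ^ k :=
    summable_pow_mul_geometric_of_norm_lt_one 1 hr'
  refine ((hlin.mul_right A).add ((summable_geometric_of_lt_one hr0 hr).mul_right (A + C))).congr
    fun k => ?_
  ring

theorem abs_sum_range_mul_le {a : ℕ → ℝ} {B : ℝ} (ha : ∀ k, |a k| ≤ B) (n : ℕ) :
    |∑ j ∈ range (n + 1), a j * a (n - j)| ≤ (n + 1) * B ^ 2 := by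
  calc |∑ j ∈ range (n + 1), a j * a (n - j)|
      ≤ ∑ j ∈ range (n + 1), |a j| * |a (n - j)| := by
        simpa only [abs_mul] using abs_sum_le_sum_abs (fun j => a j * a (n - j)) _
    _ ≤ ∑ _j ∈ range (n + 1), B ^ 2 := sum_le_sum fun j _ => by
        rw [sq]
        exact mul_le_mul (ha j) (ha _) (abs_nonneg _) ((abs_nonneg _).trans (ha j))
    _ = (n + 1) * B ^ 2 := by simp

theorem abs_epsN_le (ε : ℝ) (k : ℕ) : |epsN ε k| ≤ |ε| := by
  unfold epsN
  split_ifs <;> simp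

theorem epsN_eq_zero {ε : ℝ} {k : ℕ} (hk : 2 ≤ k) : epsN ε k = 0 := by
  simp [epsN, show k ≠ 0 by omega, show k ≠ 1 by omega]

theorem hasSum_pow_mul_epsN (ε : ℝ) (z : ℂ) :
    HasSum (fun k => z ^ k * (epsN ε k : ℂ)) (ε * (1 - z)) := by
  have h := hasSum_pow_mul_of_eq_zero (z := z) (a := fun k => (epsN ε k : ℂ)) fun k hk => by
    simp [epsN_eq_zero hk]
  simp only [epsN, ↓reduceIte, one_ne_zero, Complex.ofReal_neg] at h
  rwa [show (ε : ℂ) + z * -ε = ε * (1 - z) by ring] at h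

namespace IsInfRiccatiSol

variable {T ε c : ℝ} {ϕ : ℕ → ℝ → ℝ}

theorem continuousOn_rhs (hϕ : IsInfRiccatiSol T ε c ϕ) (k : ℕ) :
    ContinuousOn (fun t => ∑ j ∈ range (k + 1), ϕ j t * ϕ (k - j) t - epsN ε k) (Icc 0 T) := by
  have hcont : ∀ j, ContinuousOn (ϕ j) (Icc 0 T) := fun j t ht => (hϕ.1 j t ht).continuousWithinAt
  exact (continuousOn_finsetSum _ fun j _ => (hcont j).mul (hcont _)).sub continuousOn_const

theorem hasSum_terminal (hϕ : IsInfRiccatiSol T ε c ϕ) (z : ℂ) :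
    HasSum (fun k => z ^ k * (ϕ k T : ℂ)) (c * (1 - z)) := by
  have h := hasSum_pow_mul_of_eq_zero (z := z) (a := fun k => (ϕ k T : ℂ)) fun k hk => by
    simp [hϕ.2.2.2 k hk]
  simp only [hϕ.2.1, hϕ.2.2.1, Complex.ofReal_neg] at h
  rwa [show (c : ℂ) + z * -c = c * (1 - z) by ring] at h

end IsInfRiccatiSol

theorem generating_function_riccati
    (T ε c : ℝ)
    (ϕ : ℕ → ℝ → ℝ) (hϕ : IsInfRiccatiSol T ε c ϕ)
    (hbd : ∃ B : ℝ, ∀ k : ℕ, ∀ t ∈ Set.Icc (0:ℝ) T, |ϕ k t| ≤ B) :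
    ∀ z : ℂ, ‖z‖ < 1 →
      (∀ t ∈ Set.Icc (0:ℝ) T, Summable (fun k : ℕ => ‖z ^ k * (ϕ k t : ℂ)‖)) ∧
      (∀ t ∈ Set.Icc (0:ℝ) T,
        HasDerivWithinAt (fun s : ℝ => ∑' k : ℕ, z ^ k * (ϕ k s : ℂ))
          ((∑' k : ℕ, z ^ k * (ϕ k t : ℂ)) ^ 2 - (ε : ℂ) * (1 - z))
          (Set.Icc (0:ℝ) T) t) ∧
      (∑' k : ℕ, z ^ k * (ϕ k T : ℂ)) = (c : ℂ) * (1 - z) := by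
  obtain ⟨B, hB⟩ := hbd
  intro z hz
  have hsum (t) (ht : t ∈ Icc 0 T) : Summable fun k => ‖z ^ k * (ϕ k t : ℂ)‖ :=
    summable_norm_pow_mul_of_norm_le hz fun k => by simpa using hB k t ht
  refine ⟨hsum, fun t ht => ?_, (hϕ.hasSum_terminal z).tsum_eq⟩
  have hrhs (k) (s) (hs : s ∈ Icc 0 T) :
      ‖z ^ k * ((∑ j ∈ range (k + 1), ϕ j s * ϕ (k - j) s - epsN ε k : ℝ) : ℂ)‖ ≤
        ‖z‖ ^ k * ((k + 1) * B ^ 2 + |ε|) := by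
    rw [norm_mul, norm_pow, Complex.norm_real, Real.norm_eq_abs]
    gcongr
    exact (abs_sub _ _).trans (add_le_add (abs_sum_range_mul_le (hB · s hs) k) (abs_epsN_le ε k))
  have hderiv := hasDerivWithinAt_tsum_Icc
    (summable_geometric_mul_linear (norm_nonneg z) hz (B ^ 2) |ε|)
    (fun k s hs => ((hϕ.1 k s hs).ofReal_comp).const_mul (z ^ k))
    (fun k => continuousOn_const.mul (Complex.continuous_ofReal.comp_continuousOn
      (hϕ.continuousOn_rhs k))) hrhs (fun s hs => (hsum s hs).of_norm) ht
  refine hderiv.congr_deriv ?_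
  refine ((hasSum_pow_mul_convolution (hsum t ht)).sub (hasSum_pow_mul_epsN ε z)
    |>.congr_fun fun k => ?_).tsum_eq
  push_cast
  ring
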